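/- arXiv:2502.19120 — 2 statements merged into one kernel-verified Lean document; each statement's English description precedes it below -/
import Mathlib

section
/- (Norm of a causal function's transform from its real part alone.) Let f ∈ L²(ℝ, ℂ) vanish almost everywhere on (−∞, 0). Then ∫_ℝ |𝔉f(ξ)|² dξ = 2 ∫_ℝ (Re 𝔉f(ξ))² dξ; equivalently, ‖𝔉f‖_{L²(ℝ)} = √2 · ‖Re 𝔉f‖_{L²(ℝ)}. -/
/-!
Write `f^*(x) = conj (f (-x))`. The Fourier transform intertwines `f ↦ f^*` with pointwise
conjugation (checked on integrable functions, then extended by density and continuity), so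
`𝔉(f + f^*) = 2 Re 𝔉f`. If `f` is causal, `f` and `f^*` have disjoint supports, hence are
orthogonal in `L²` with equal norms, and Plancherel gives
`4 ‖Re 𝔉f‖² = ‖f + f^*‖² = 2 ‖f‖² = 2 ‖𝔉f‖²`.
-/

open MeasureTheory Complex Real

open scoped ComplexConjugate InnerProductSpace

noncomputable section

namespace MeasureTheory

variable {α : Type*} [MeasurableSpace α] {μ : Measure α}

theorem Lp.simpleFunc.integrable {E : Type*} [NormedAddCommGroup E] {p : ENNReal}
    (hp_pos : p ≠ 0) (hp_ne_top : p ≠ ⊤) (s : Lp.simpleFunc E p μ) :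
    Integrable (s : α → E) μ := by
  have hs := Lp.simpleFunc.toSimpleFunc_eq_toFun s
  refine Integrable.congr ?_ hs
  exact (SimpleFunc.memLp_iff_integrable hp_pos hp_ne_top).mp
    ((Lp.memLp (s : Lp E p μ)).ae_eq hs.symm)

theorem Lp.integral_norm_sq_eq_norm_sq {E : Type*} [NormedAddCommGroup E] (f : Lp E 2 μ) :
    ∫ x, ‖f x‖ ^ 2 ∂μ = ‖f‖ ^ 2 := by
  have hf := Lp.aestronglyMeasurable f
  rw [Lp.norm_def, toReal_eLpNorm hf,
    lpNorm_eq_integral_norm_rpow_toReal two_ne_zero ENNReal.ofNat_ne_top hf]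
  simp only [ENNReal.toReal_ofNat, Real.rpow_ofNat]
  exact_mod_cast
    (Real.rpow_inv_natCast_pow (integral_nonneg fun x => by positivity) two_ne_zero).symm

theorem L2.inner_eq_zero_of_ae_eq_zero_or {𝕜 E : Type*} [RCLike 𝕜] [NormedAddCommGroup E]
    [InnerProductSpace 𝕜 E] (f g : Lp E 2 μ) (h : ∀ᵐ x ∂μ, f x = 0 ∨ g x = 0) :
    ⟪f, g⟫_𝕜 = 0 := by
  rw [L2.inner_def]
  refine integral_eq_zero_of_ae ?_
  filter_upwards [h] with x hx
  rcases hx with hx | hx <;> simp [hx]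

variable {p : ENNReal} [Fact (1 ≤ p)]

def Lp.conj : Lp ℂ p μ →L⋆[ℂ] Lp ℂ p μ :=
  (starL ℂ : ℂ ≃L⋆[ℂ] ℂ).toContinuousLinearMap.compLpL p μ

theorem Lp.coeFn_conj (g : Lp ℂ p μ) : Lp.conj g =ᵐ[μ] fun x => conj (g x) :=
  ContinuousLinearMap.coeFn_compLpL _ _

theorem Lp.norm_conj (g : Lp ℂ p μ) : ‖Lp.conj g‖ = ‖g‖ := by
  rw [Lp.norm_def, Lp.norm_def, eLpNorm_congr_ae (Lp.coeFn_conj g)]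
  exact congrArg ENNReal.toReal eLpNorm_star

theorem L2.norm_add_conj_sq (g : Lp ℂ 2 μ) :
    ‖g + Lp.conj g‖ ^ 2 = 4 * ∫ x, (g x).re ^ 2 ∂μ := by
  rw [← Lp.integral_norm_sq_eq_norm_sq, ← integral_const_mul]
  refine integral_congr_ae ?_
  filter_upwards [Lp.coeFn_add g (Lp.conj g), Lp.coeFn_conj g] with x hadd hconj
  rw [hadd, Pi.add_apply, hconj, add_conj, norm_real, Real.norm_eq_abs, sq_abs]
  ring

end MeasureTheory

section ConjReflect

variable {p : ENNReal} [Fact (1 ≤ p)]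

def conjReflect (g : Lp ℂ p (volume : Measure ℝ)) : Lp ℂ p (volume : Measure ℝ) :=
  Lp.conj (Lp.compMeasurePreserving Neg.neg (Measure.measurePreserving_neg volume) g)

theorem coeFn_conjReflect (g : Lp ℂ p (volume : Measure ℝ)) :
    conjReflect g =ᵐ[volume] fun x => conj (g (-x)) := by
  refine (Lp.coeFn_conj _).trans ?_
  filter_upwards [Lp.coeFn_compMeasurePreserving g (Measure.measurePreserving_neg volume)]
    with x hneg
  rw [hneg, Function.comp_apply]

theorem continuous_conjReflect : Continuous (conjReflect (p := p)) :=
  (Lp.conj (μ := volume) (p := p)).continuous.comp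
    (Lp.isometry_compMeasurePreserving (E := ℂ) (Measure.measurePreserving_neg volume)).continuous

theorem norm_conjReflect (g : Lp ℂ p (volume : Measure ℝ)) : ‖conjReflect g‖ = ‖g‖ := by
  rw [conjReflect, Lp.norm_conj, Lp.norm_compMeasurePreserving]

theorem integrable_conjReflect {g : Lp ℂ p (volume : Measure ℝ)}
    (hg : Integrable (g : ℝ → ℂ)) : Integrable (conjReflect g : ℝ → ℂ) :=
  ((conjCLE : ℂ →L[ℝ] ℂ).integrable_comp hg.comp_neg).congr (coeFn_conjReflect g).symm

theorem ae_eq_zero_or_conjReflect_eq_zero {g : Lp ℂ p (volume : Measure ℝ)}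
    (hg : ∀ᵐ x : ℝ, x < 0 → g x = 0) : ∀ᵐ x : ℝ, g x = 0 ∨ conjReflect g x = 0 := by
  have hg_neg : ∀ᵐ x : ℝ, -x < 0 → g (-x) = 0 :=
    (Measure.measurePreserving_neg volume).quasiMeasurePreserving.ae hg
  filter_upwards [hg, hg_neg, coeFn_conjReflect g, Measure.ae_ne volume 0]
    with x hx hx_neg hconj hx0
  rcases hx0.lt_or_gt with hlt | hgt
  · exact .inl (hx hlt)
  · exact .inr (by rw [hconj, hx_neg (neg_lt_zero.mpr hgt), map_zero])

end ConjReflect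

theorem integral_fourierKernel_mul_conj_neg (h : ℝ → ℂ) (ξ : ℝ) :
    ∫ x : ℝ, exp (-2 * π * x * ξ * I) * conj (h (-x)) =
      conj (∫ x : ℝ, exp (-2 * π * x * ξ * I) * h x) := by
  rw [← integral_conj, ← integral_neg_eq_self]
  refine integral_congr_ae (Filter.Eventually.of_forall fun x => ?_)
  simp only [map_mul, ← exp_conj, neg_neg]
  congr 2
  push_cast
  simp only [map_neg, conj_ofReal, conj_I, map_ofNat]
  ring

def ExtendsFourierIntegral (F : Lp ℂ 2 (volume : Measure ℝ) → Lp ℂ 2 (volume : Measure ℝ)) :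
    Prop :=
  ∀ f : Lp ℂ 2 (volume : Measure ℝ), Integrable (f : ℝ → ℂ) →
    (F f : ℝ → ℂ) =ᵐ[volume] fun ξ : ℝ => ∫ x : ℝ, exp (-2 * π * x * ξ * I) * f x

namespace ExtendsFourierIntegral

variable {F : Lp ℂ 2 (volume : Measure ℝ) → Lp ℂ 2 (volume : Measure ℝ)}

theorem map_conjReflect_of_integrable (hF : ExtendsFourierIntegral F)
    {g : Lp ℂ 2 (volume : Measure ℝ)} (hg : Integrable (g : ℝ → ℂ)) :
    F (conjReflect g) = Lp.conj (F g) := by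
  refine Lp.ext ?_
  filter_upwards [hF _ (integrable_conjReflect hg), hF g hg, Lp.coeFn_conj (F g)]
    with ξ hrefl hg hconj
  rw [hrefl, hconj, hg, ← integral_fourierKernel_mul_conj_neg]
  refine integral_congr_ae ?_
  filter_upwards [coeFn_conjReflect g] with x hx
  rw [hx]

theorem map_conjReflect (hF : ExtendsFourierIntegral F) (hF_cont : Continuous F)
    (g : Lp ℂ 2 (volume : Measure ℝ)) : F (conjReflect g) = Lp.conj (F g) := by
  have h_dense :=
    Lp.simpleFunc.denseRange (E := ℂ) (μ := (volume : Measure ℝ)) (p := 2) ENNReal.ofNat_ne_top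
  have h : (fun g => F (conjReflect g)) = fun g => Lp.conj (F g) :=
    h_dense.equalizer (hF_cont.comp continuous_conjReflect) (Lp.conj.continuous.comp hF_cont)
    (funext fun s => hF.map_conjReflect_of_integrable
      (Lp.simpleFunc.integrable two_ne_zero ENNReal.ofNat_ne_top s))
  exact congrFun h g

end ExtendsFourierIntegral

end

/-- Norm of a causal function's transform from its real part alone.  Here `F` is the
Fourier–Plancherel transform on `L²(ℝ, ℂ)`: a unitary map agreeing on integrable functions with
`𝔉f(ξ) = ∫_ℝ e^{-2πixξ} f(x) dx`.  If `f ∈ L²(ℝ, ℂ)` vanishes a.e. on `(−∞, 0)`, then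
`∫_ℝ |𝔉f(ξ)|² dξ = 2 ∫_ℝ (Re 𝔉f(ξ))² dξ`; equivalently
`‖𝔉f‖_{L²} = √2 ‖Re 𝔉f‖_{L²}`. -/
theorem causal_norm_from_real_part
    (F : Lp ℂ 2 (volume : Measure ℝ) ≃ₗᵢ[ℂ] Lp ℂ 2 (volume : Measure ℝ))
    (hF : ∀ f : Lp ℂ 2 (volume : Measure ℝ), Integrable (f : ℝ → ℂ) volume →
      (F f : ℝ → ℂ) =ᵐ[volume]
        fun ξ : ℝ => ∫ x : ℝ, Complex.exp (-2 * Real.pi * x * ξ * Complex.I) * f x)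
    (f : Lp ℂ 2 (volume : Measure ℝ))
    (hvanish : ∀ᵐ x : ℝ ∂volume, x < 0 → (f : ℝ → ℂ) x = 0) :
    (∫ ξ : ℝ, ‖(F f : ℝ → ℂ) ξ‖ ^ 2) = 2 * ∫ ξ : ℝ, ((F f : ℝ → ℂ) ξ).re ^ 2 ∧
    Real.sqrt (∫ ξ : ℝ, ‖(F f : ℝ → ℂ) ξ‖ ^ 2) =
      Real.sqrt 2 * Real.sqrt (∫ ξ : ℝ, ((F f : ℝ → ℂ) ξ).re ^ 2) := by
  have hF_conj : F (conjReflect f) = Lp.conj (F f) :=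
    ExtendsFourierIntegral.map_conjReflect hF F.continuous f
  have h_orth : ⟪f, conjReflect f⟫_ℂ = 0 :=
    L2.inner_eq_zero_of_ae_eq_zero_or _ _ (ae_eq_zero_or_conjReflect_eq_zero hvanish)
  have h_four : 4 * ∫ ξ, ((F f : ℝ → ℂ) ξ).re ^ 2 = 2 * ∫ ξ, ‖(F f : ℝ → ℂ) ξ‖ ^ 2 :=
    calc 4 * ∫ ξ, ((F f : ℝ → ℂ) ξ).re ^ 2
        = ‖F f + Lp.conj (F f)‖ ^ 2 := (L2.norm_add_conj_sq _).symm
      _ = ‖f + conjReflect f‖ ^ 2 := by rw [← hF_conj, ← map_add, F.norm_map]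
      _ = ‖f‖ ^ 2 + ‖conjReflect f‖ ^ 2 := by
        rw [@norm_add_sq ℂ, h_orth, map_zero, mul_zero, add_zero]
      _ = 2 * ∫ ξ, ‖(F f : ℝ → ℂ) ξ‖ ^ 2 := by
        rw [norm_conjReflect, Lp.integral_norm_sq_eq_norm_sq, F.norm_map]; ring
  have h_two : ∫ ξ, ‖(F f : ℝ → ℂ) ξ‖ ^ 2 = 2 * ∫ ξ, ((F f : ℝ → ℂ) ξ).re ^ 2 := by linarith
  exact ⟨h_two, by rw [h_two, Real.sqrt_mul zero_le_two]⟩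
end

section
/- (Titchmarsh relations for causal functions.) Let f ∈ L²(ℝ, ℂ) be real-valued almost everywhere and vanish almost everywhere on (−∞, 0). Then the real and imaginary parts of its Fourier–Plancherel transform are related by the Hilbert transform: Im 𝔉f = −H(Re 𝔉f) and Re 𝔉f = H(Im 𝔉f) as elements of L²(ℝ) (with the stated conventions for 𝔉 and H). -/
open MeasureTheory Complex Real FourierTransform ComplexConjugate

/-! On L², `𝔉 ∘ conj = conj ∘ R ∘ 𝔉` and `𝔉 ∘ 𝔉 = R`, where `R g = g(-·)`. For real `f`
these give that `𝔉(Re 𝔉f) = (f + Rf)/2` is the even part of `f` and `𝔉(Im 𝔉f) = i (f - Rf)/2`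
is `i` times its odd part. Because `f` vanishes on `(-∞, 0)`, its odd part is `sgn` times its
even part, whence `𝔉(Im 𝔉f) = i·sgn·𝔉(Re 𝔉f)`; both relations follow by comparing Fourier
transforms, using `sgn² = 1` a.e. The two L² identities for `𝔉` hold on Schwartz functions by
Fourier inversion and extend by density. -/

local notation "L²(ℝ)" => Lp ℂ 2 (volume : Measure ℝ)

lemma Real.fourier_eq_integral_exp_mul (ψ : ℝ → ℂ) (ξ : ℝ) :
    𝓕 ψ ξ = ∫ x : ℝ, Complex.exp (-2 * π * x * ξ * I) * ψ x := by
  rw [Real.fourier_real_eq_integral_exp_smul]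
  congr 1 with x
  rw [smul_eq_mul]
  push_cast
  ring_nf

lemma Real.fourier_conj_apply (ψ : ℝ → ℂ) (ξ : ℝ) :
    𝓕 (fun x => conj (ψ x)) ξ = conj (𝓕 ψ (-ξ)) := by
  simp only [Real.fourier_eq_integral_exp_mul, ← integral_conj, map_mul, ← exp_conj,
    conj_ofReal, conj_I, map_neg, map_mul, map_ofNat]
  congr 1 with x
  push_cast
  ring_nf

lemma Real.ae_comp_neg {p : ℝ → Prop} (h : ∀ᵐ x : ℝ, p x) : ∀ᵐ x : ℝ, p (-x) :=
  (Measure.measurePreserving_neg (volume : Measure ℝ)).quasiMeasurePreserving.ae h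

lemma Real.sign_smul_add_comp_neg_ae_eq {E : Type*} [AddCommGroup E] [Module ℝ E] {f : ℝ → E}
    (hf : ∀ᵐ x : ℝ, x < 0 → f x = 0) :
    ∀ᵐ ξ : ℝ, Real.sign ξ • (f ξ + f (-ξ)) = f ξ - f (-ξ) := by
  filter_upwards [hf, Real.ae_comp_neg hf] with ξ hξ hnegξ
  rcases lt_trichotomy ξ 0 with hneg | rfl | hpos
  · simp [Real.sign_of_neg hneg, hξ hneg]
  · simp
  · simp [Real.sign_of_pos hpos, hnegξ (neg_neg_of_pos hpos)]

namespace Titchmarsh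

noncomputable def reflect : L²(ℝ) →+ L²(ℝ) :=
  Lp.compMeasurePreserving Neg.neg (Measure.measurePreserving_neg volume)

noncomputable def conjL : L²(ℝ) →L[ℝ] L²(ℝ) :=
  conjCLE.toContinuousLinearMap.compLpL 2 volume

lemma coeFn_reflect (g : L²(ℝ)) : (reflect g : ℝ → ℂ) =ᵐ[volume] fun x => g (-x) :=
  Lp.coeFn_compMeasurePreserving g _

lemma coeFn_reflect_of_ae_eq {g : L²(ℝ)} {φ : ℝ → ℂ} (h : (g : ℝ → ℂ) =ᵐ[volume] φ) :
    (reflect g : ℝ → ℂ) =ᵐ[volume] fun x => φ (-x) := by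
  filter_upwards [coeFn_reflect g, Real.ae_comp_neg h] with x hx hφ
  rw [hx, hφ]

lemma continuous_reflect : Continuous reflect :=
  (Lp.isometry_compMeasurePreserving _).continuous

lemma reflect_reflect (g : L²(ℝ)) : reflect (reflect g) = g := by
  refine Lp.ext ?_
  filter_upwards [coeFn_reflect_of_ae_eq (coeFn_reflect g)] with x hx
  rw [hx, neg_neg]

lemma coeFn_conjL (g : L²(ℝ)) : (conjL g : ℝ → ℂ) =ᵐ[volume] fun x => conj (g x) :=
  ContinuousLinearMap.coeFn_compLpL _ _

lemma conjL_eq_self (g : L²(ℝ)) (hg : ∀ᵐ x : ℝ, ((g : ℝ → ℂ) x).im = 0) : conjL g = g := by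
  refine Lp.ext ?_
  filter_upwards [coeFn_conjL g, hg] with x h1 h2
  rw [h1, conj_eq_iff_im.2 h2]

lemma eq_smul_add_conjL {g u : L²(ℝ)} (hu : (u : ℝ → ℂ) =ᵐ[volume] fun x => ((g x).re : ℂ)) :
    u = (2⁻¹ : ℂ) • (g + conjL g) := by
  refine Lp.ext ?_
  filter_upwards [hu, Lp.coeFn_smul (2⁻¹ : ℂ) (g + conjL g), Lp.coeFn_add g (conjL g),
    coeFn_conjL g] with x hux h1 h2 h3
  rw [hux, h1, Pi.smul_apply, h2, Pi.add_apply, h3, add_conj, smul_eq_mul]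
  push_cast
  ring

lemma eq_smul_sub_conjL {g v : L²(ℝ)} (hv : (v : ℝ → ℂ) =ᵐ[volume] fun x => ((g x).im : ℂ)) :
    v = (-I / 2) • (g - conjL g) := by
  refine Lp.ext ?_
  filter_upwards [hv, Lp.coeFn_smul (-I / 2) (g - conjL g), Lp.coeFn_sub g (conjL g),
    coeFn_conjL g] with x hvx h1 h2 h3
  rw [hvx, h1, Pi.smul_apply, h2, Pi.sub_apply, h3, sub_conj, smul_eq_mul]
  push_cast
  linear_combination (((g x).im : ℂ)) * I_mul_I

lemma eq_of_forall_schwartz {X : Type*} [TopologicalSpace X] [T2Space X] {P Q : L²(ℝ) → X}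
    (hP : Continuous P) (hQ : Continuous Q)
    (h : ∀ s : SchwartzMap ℝ ℂ, P (s.toLp 2) = Q (s.toLp 2)) (g : L²(ℝ)) : P g = Q g :=
  (SchwartzMap.denseRange_toLpCLM (F := ℂ) (p := 2) (μ := volume)
    ENNReal.ofNat_ne_top).induction_on g (isClosed_eq hP hQ) h

def IsFourierPlancherel (F : L²(ℝ) ≃ₗᵢ[ℂ] L²(ℝ)) : Prop :=
  ∀ f : L²(ℝ), Integrable (f : ℝ → ℂ) volume →
    (F f : ℝ → ℂ) =ᵐ[volume] fun ξ : ℝ => ∫ x : ℝ, Complex.exp (-2 * π * x * ξ * I) * f x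

namespace IsFourierPlancherel

variable {F : L²(ℝ) ≃ₗᵢ[ℂ] L²(ℝ)} (hF : IsFourierPlancherel F)
include hF

lemma coeFn_eq_fourier {g : L²(ℝ)} {ψ : ℝ → ℂ} (hg : (g : ℝ → ℂ) =ᵐ[volume] ψ)
    (hψ : Integrable ψ) : (F g : ℝ → ℂ) =ᵐ[volume] 𝓕 ψ := by
  filter_upwards [hF g (hψ.congr hg.symm)] with ξ hξ
  rw [hξ, Real.fourier_eq_integral_exp_mul]
  refine integral_congr_ae ?_
  filter_upwards [hg] with x hx
  rw [hx]

lemma apply_apply (g : L²(ℝ)) : F (F g) = reflect g := by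
  refine eq_of_forall_schwartz (F.continuous.comp F.continuous) continuous_reflect (fun s => ?_) g
  have hFsi : Integrable (𝓕 (s : ℝ → ℂ)) := by
    rw [← SchwartzMap.fourier_coe]
    exact (𝓕 s).integrable
  have hFs : (F (s.toLp 2) : ℝ → ℂ) =ᵐ[volume] 𝓕 (s : ℝ → ℂ) :=
    hF.coeFn_eq_fourier (s.coeFn_toLp 2 volume) s.integrable
  have hRs : (reflect (s.toLp 2) : ℝ → ℂ) =ᵐ[volume] fun x => s (-x) :=
    coeFn_reflect_of_ae_eq (s.coeFn_toLp 2 volume)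
  have hinv : 𝓕 (𝓕 (s : ℝ → ℂ)) = fun x => s (-x) := funext fun x => by
    rw [← neg_neg x, ← Real.fourierInv_eq_fourier_neg, neg_neg,
      s.continuous.fourierInv_fourier_eq s.integrable hFsi]
  exact Lp.ext ((hF.coeFn_eq_fourier hFs hFsi).trans (hinv ▸ hRs.symm))

lemma apply_conjL (g : L²(ℝ)) : F (conjL g) = conjL (reflect (F g)) := by
  refine eq_of_forall_schwartz (F.continuous.comp conjL.continuous)
    (conjL.continuous.comp (continuous_reflect.comp F.continuous)) (fun s => ?_) g
  show F (conjL (s.toLp 2)) = conjL (reflect (F (s.toLp 2)))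
  have hCs : (conjL (s.toLp 2) : ℝ → ℂ) =ᵐ[volume] fun x => conj (s x) := by
    filter_upwards [coeFn_conjL (s.toLp 2), s.coeFn_toLp 2 volume] with x h1 h2
    rw [h1, h2]
  have hFCs : (F (conjL (s.toLp 2)) : ℝ → ℂ) =ᵐ[volume] 𝓕 (fun x => conj (s x)) :=
    hF.coeFn_eq_fourier hCs
      ((conjCLE.toContinuousLinearMap : ℂ →L[ℝ] ℂ).integrable_comp s.integrable)
  refine Lp.ext (hFCs.trans ?_)
  filter_upwards [coeFn_conjL (reflect (F (s.toLp 2))),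
    coeFn_reflect_of_ae_eq (hF.coeFn_eq_fourier (s.coeFn_toLp 2 volume) s.integrable)]
    with x h1 h2
  rw [Real.fourier_conj_apply, h1, h2]

variable {f : L²(ℝ)} (hreal : ∀ᵐ x : ℝ, ((f : ℝ → ℂ) x).im = 0)
include hreal

lemma apply_conjL_apply_of_real : F (conjL (F f)) = f := by
  rw [hF.apply_conjL, hF.apply_apply, reflect_reflect, conjL_eq_self f hreal]

lemma apply_re_apply {u : L²(ℝ)}
    (hu : (u : ℝ → ℂ) =ᵐ[volume] fun ξ => (((F f : ℝ → ℂ) ξ).re : ℂ)) :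
    F u = (2⁻¹ : ℂ) • (f + reflect f) := by
  rw [eq_smul_add_conjL hu, map_smul, map_add, hF.apply_conjL_apply_of_real hreal,
    hF.apply_apply, add_comm]

lemma apply_im_apply {v : L²(ℝ)}
    (hv : (v : ℝ → ℂ) =ᵐ[volume] fun ξ => (((F f : ℝ → ℂ) ξ).im : ℂ)) :
    F v = (I / 2) • (f - reflect f) := by
  rw [eq_smul_sub_conjL hv, map_smul, map_sub, hF.apply_conjL_apply_of_real hreal,
    hF.apply_apply, neg_div, neg_smul, ← smul_neg, neg_sub]

lemma apply_im_apply_ae_eq_I_mul_sign_mul (hvanish : ∀ᵐ x : ℝ, x < 0 → (f : ℝ → ℂ) x = 0)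
    {u v : L²(ℝ)} (hu : (u : ℝ → ℂ) =ᵐ[volume] fun ξ => (((F f : ℝ → ℂ) ξ).re : ℂ))
    (hv : (v : ℝ → ℂ) =ᵐ[volume] fun ξ => (((F f : ℝ → ℂ) ξ).im : ℂ)) :
    (F v : ℝ → ℂ) =ᵐ[volume] fun ξ => I * Real.sign ξ * (F u : ℝ → ℂ) ξ := by
  rw [hF.apply_re_apply hreal hu, hF.apply_im_apply hreal hv]
  filter_upwards [Lp.coeFn_smul (2⁻¹ : ℂ) (f + reflect f), Lp.coeFn_add f (reflect f),
    Lp.coeFn_smul (I / 2) (f - reflect f), Lp.coeFn_sub f (reflect f), coeFn_reflect f,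
    Real.sign_smul_add_comp_neg_ae_eq hvanish] with ξ hu1 hu2 hv1 hv2 hR hsign
  rw [hu1, hv1, Pi.smul_apply, Pi.smul_apply, hu2, hv2, Pi.add_apply, Pi.sub_apply, hR,
    ← hsign, real_smul, smul_eq_mul, smul_eq_mul]
  ring

end IsFourierPlancherel

end Titchmarsh

open Titchmarsh

/-- Titchmarsh relations for causal functions.  Here `F` is the Fourier–Plancherel transform on
`L²(ℝ, ℂ)`: a unitary map agreeing on integrable functions with
`𝔉f(ξ) = ∫_ℝ e^{-2πixξ} f(x) dx`.  Let `f ∈ L²(ℝ, ℂ)` be real-valued a.e. and vanish a.e. on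
`(−∞, 0)`.  Let `u, v ∈ L²(ℝ, ℂ)` represent the (real-valued) real and imaginary parts of
`𝔉f`, and let `Hu`, `Hv` be their Hilbert transforms (characterized by
`F(Hu) = -i·sgn·(Fu)` a.e., resp. for `v`).  Then `Im 𝔉f = −H(Re 𝔉f)` and
`Re 𝔉f = H(Im 𝔉f)` as elements of `L²`, i.e. `v = -Hu` and `u = Hv`. -/
theorem titchmarsh_relations
    (F : Lp ℂ 2 (volume : Measure ℝ) ≃ₗᵢ[ℂ] Lp ℂ 2 (volume : Measure ℝ))
    (hF : ∀ f : Lp ℂ 2 (volume : Measure ℝ), Integrable (f : ℝ → ℂ) volume →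
      (F f : ℝ → ℂ) =ᵐ[volume]
        fun ξ : ℝ => ∫ x : ℝ, Complex.exp (-2 * Real.pi * x * ξ * Complex.I) * f x)
    (f : Lp ℂ 2 (volume : Measure ℝ))
    (hreal : ∀ᵐ x : ℝ ∂volume, ((f : ℝ → ℂ) x).im = 0)
    (hvanish : ∀ᵐ x : ℝ ∂volume, x < 0 → (f : ℝ → ℂ) x = 0)
    (u v Hu Hv : Lp ℂ 2 (volume : Measure ℝ))
    (hu : (u : ℝ → ℂ) =ᵐ[volume] fun ξ : ℝ => (((F f : ℝ → ℂ) ξ).re : ℂ))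
    (hv : (v : ℝ → ℂ) =ᵐ[volume] fun ξ : ℝ => (((F f : ℝ → ℂ) ξ).im : ℂ))
    (hHu : (F Hu : ℝ → ℂ) =ᵐ[volume]
      fun ξ : ℝ => -Complex.I * (Real.sign ξ : ℝ) * (F u : ℝ → ℂ) ξ)
    (hHv : (F Hv : ℝ → ℂ) =ᵐ[volume]
      fun ξ : ℝ => -Complex.I * (Real.sign ξ : ℝ) * (F v : ℝ → ℂ) ξ) :
    v = -Hu ∧ u = Hv := by
  have hFv : (F v : ℝ → ℂ) =ᵐ[volume] fun ξ => I * Real.sign ξ * (F u : ℝ → ℂ) ξ :=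
    IsFourierPlancherel.apply_im_apply_ae_eq_I_mul_sign_mul hF hreal hvanish hu hv
  constructor
  · apply F.injective
    rw [map_neg]
    refine Lp.ext ?_
    filter_upwards [hFv, Lp.coeFn_neg (F Hu), hHu] with ξ hv' hneg hHu'
    rw [hv', hneg, Pi.neg_apply, hHu']
    ring
  · apply F.injective
    refine Lp.ext ?_
    filter_upwards [hHv, hFv, Measure.ae_ne volume 0] with ξ hHv' hv' hξ
    rw [hHv', hv']
    rcases Real.sign_apply_eq_of_ne_zero ξ hξ with hsign | hsign <;>
      · rw [hsign]
        push_cast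
        linear_combination ((F u : ℝ → ℂ) ξ) * I_mul_I
end
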